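/- For 0 ≤ k < n, the quotient Sₖ₊₁/Sₖ of normalized elementary symmetric polynomials on the positive cone Γ₊ ⊂ ℝⁿ is inverse-concave: the map x ↦ -(Sₖ₊₁/Sₖ)(x₁⁻¹,...,xₙ⁻¹) is concave on Γ₊. Equivalently, ((Sₖ₊₁/Sₖ)(x₁⁻¹,...,xₙ⁻¹))⁻¹ = (S_{n-k}/S_{n-k-1})(x₁,...,xₙ) for x ∈ Γ₊. -/

import Mathlib

noncomputable section

/-- The open positive cone in `ℝⁿ`. -/
def posCone (n : ℕ) : Set (Fin n → ℝ) := {x | ∀ i, 0 < x i}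

/-- Coordinatewise inversion. -/
def invPt {n : ℕ} (x : Fin n → ℝ) : Fin n → ℝ := fun i => (x i)⁻¹

/-- The normalized `k`-th elementary symmetric polynomial. -/
def eS (n k : ℕ) (x : Fin n → ℝ) : ℝ :=
  ((n.choose k : ℝ))⁻¹ * ∑ A ∈ Finset.powersetCard k (Finset.univ : Finset (Fin n)), ∏ i ∈ A, x i

/-!
Complementation `A ↦ univ \ A` gives `Sⱼ(x⁻¹) = Sₙ₋ⱼ(x) / ∏ xᵢ`, so the quotient evaluated at
`x⁻¹` is the reciprocal of `g = Sᵣ₊₁ / Sᵣ` at `x`, with `r = n - k - 1`. The reciprocal of a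
positive concave function is convex, so it suffices that `g` is concave; since `g` is
`1`-homogeneous this is the Marcus–Lopes superadditivity `g(x) + g(y) ≤ g(x + y)`.
That inequality is proved by induction on `r`. For the unnormalized sums `Eᵣ(s)`, Euler's
identity and the recursion `Eᵣ₊₁(s) = xᵢ Eᵣ(s \ i) + Eᵣ₊₁(s \ i)` write `Eᵣ₊₂ / Eᵣ₊₁` as an
average of the parallel sums `xᵢ ∥ (Eᵣ₊₁ / Eᵣ)(s \ i)`, and the parallel sum
`a ∥ b = ab / (a + b)` is superadditive and monotone.
-/

open Finset

theorem concaveOn_of_superadditive_of_homogeneous {E : Type*} [AddCommMonoid E] [Module ℝ E]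
    {s : Set E} {f : E → ℝ} (hs : Convex ℝ s) (hsmul : ∀ x ∈ s, ∀ c : ℝ, 0 < c → c • x ∈ s)
    (hhom : ∀ x ∈ s, ∀ c : ℝ, 0 < c → f (c • x) = c * f x)
    (hadd : ∀ x ∈ s, ∀ y ∈ s, f x + f y ≤ f (x + y)) : ConcaveOn ℝ s f := by
  refine ⟨hs, fun x hx y hy a b ha hb hab ↦ ?_⟩
  rcases ha.eq_or_lt with rfl | ha
  · simp [show b = 1 by linarith]
  rcases hb.eq_or_lt with rfl | hb
  · simp [show a = 1 by linarith]
  calc a • f x + b • f y = f (a • x) + f (b • y) := by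
        rw [hhom x hx a ha, hhom y hy b hb, smul_eq_mul, smul_eq_mul]
    _ ≤ f (a • x + b • y) := hadd _ (hsmul x hx a ha) _ (hsmul y hy b hb)

theorem ConcaveOn.convexOn_inv {E : Type*} [AddCommMonoid E] [Module ℝ E] {s : Set E}
    {f : E → ℝ} (hf : ConcaveOn ℝ s f) (hpos : ∀ x ∈ s, 0 < f x) :
    ConvexOn ℝ s fun x ↦ (f x)⁻¹ := by
  refine ⟨hf.1, fun x hx y hy a b ha hb hab ↦ ?_⟩
  have hmean : 0 < a • f x + b • f y := convex_Ioi (0 : ℝ) (hpos x hx) (hpos y hy) ha hb hab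
  calc (f (a • x + b • y))⁻¹ ≤ (a • f x + b • f y)⁻¹ := inv_anti₀ hmean (hf.2 hx hy ha hb hab)
    _ ≤ a • (f x)⁻¹ + b • (f y)⁻¹ := by
      simpa only [zpow_neg_one] using
        (convexOn_zpow (-1)).2 (hpos x hx) (hpos y hy) ha hb hab

def parallelSum (a b : ℝ) : ℝ := a * b / (a + b)

theorem parallelSum_add_le {a b c d : ℝ} (ha : 0 < a) (hb : 0 < b) (hc : 0 < c) (hd : 0 < d) :
    parallelSum a b + parallelSum c d ≤ parallelSum (a + c) (b + d) := by
  unfold parallelSum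
  rw [div_add_div _ _ (by positivity) (by positivity),
    div_le_div_iff₀ (by positivity) (by positivity)]
  nlinarith [sq_nonneg (a * d - b * c), mul_pos ha hc]

theorem parallelSum_le_parallelSum_right {a b b' : ℝ} (ha : 0 < a) (hb : 0 < b) (h : b ≤ b') :
    parallelSum a b ≤ parallelSum a b' := by
  unfold parallelSum
  rw [div_le_div_iff₀ (by positivity) (by linarith)]
  nlinarith [sq_nonneg a]

namespace Finset

variable {ι : Type*}

def esymm (s : Finset ι) (r : ℕ) (x : ι → ℝ) : ℝ :=
  ∑ A ∈ s.powersetCard r, ∏ i ∈ A, x i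

theorem esymm_zero (s : Finset ι) (x : ι → ℝ) : s.esymm 0 x = 1 := by
  simp [esymm]

theorem esymm_one (s : Finset ι) (x : ι → ℝ) : s.esymm 1 x = ∑ i ∈ s, x i := by
  simp [esymm, powersetCard_one]

theorem esymm_pos {s : Finset ι} {r : ℕ} {x : ι → ℝ} (hr : r ≤ #s) (hx : ∀ i ∈ s, 0 < x i) :
    0 < s.esymm r x :=
  sum_pos (fun _ hA ↦ prod_pos fun i hi ↦ hx i ((mem_powersetCard.1 hA).1 hi))
    (powersetCard_nonempty.2 hr)

theorem esymm_smul (s : Finset ι) (r : ℕ) (c : ℝ) (x : ι → ℝ) :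
    s.esymm r (c • x) = c ^ r * s.esymm r x := by
  rw [esymm, esymm, mul_sum]
  refine sum_congr rfl fun A hA ↦ ?_
  simp [prod_mul_distrib, (mem_powersetCard.1 hA).2]

theorem esymm_insert [DecidableEq ι] {s : Finset ι} {i : ι} (hi : i ∉ s) (r : ℕ) (x : ι → ℝ) :
    (insert i s).esymm (r + 1) x = x i * s.esymm r x + s.esymm (r + 1) x := by
  have hdisj : Disjoint (s.powersetCard (r + 1)) ((s.powersetCard r).image (insert i)) := by
    simp only [disjoint_left, mem_image, mem_powersetCard]
    grind
  have hinj : Set.InjOn (insert i) (s.powersetCard r : Set (Finset ι)) := by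
    intro A hA B hB hAB
    rw [← erase_insert fun h ↦ hi ((mem_powersetCard.1 hA).1 h), hAB,
      erase_insert fun h ↦ hi ((mem_powersetCard.1 hB).1 h)]
  rw [esymm, powersetCard_succ_insert hi, sum_union hdisj, sum_image hinj, add_comm, esymm,
    esymm, mul_sum]
  congr 1
  exact sum_congr rfl fun A hA ↦ prod_insert fun h ↦ hi ((mem_powersetCard.1 hA).1 h)

theorem esymm_erase [DecidableEq ι] {s : Finset ι} {i : ι} (hi : i ∈ s) (r : ℕ) (x : ι → ℝ) :
    s.esymm (r + 1) x = x i * (s.erase i).esymm r x + (s.erase i).esymm (r + 1) x := by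
  rw [← esymm_insert (notMem_erase i s), insert_erase hi]

theorem succ_mul_esymm [DecidableEq ι] (s : Finset ι) (r : ℕ) (x : ι → ℝ) :
    (r + 1) * s.esymm (r + 1) x = ∑ i ∈ s, x i * (s.erase i).esymm r x := by
  calc (r + 1) * s.esymm (r + 1) x
      = ∑ B ∈ s.powersetCard (r + 1), ∑ i ∈ B, x i * ∏ j ∈ B.erase i, x j := by
        rw [esymm, mul_sum]
        refine sum_congr rfl fun B hB ↦ ?_
        rw [sum_congr rfl fun i hi ↦ mul_prod_erase B x hi, sum_const,
          (mem_powersetCard.1 hB).2, nsmul_eq_mul]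
        push_cast; ring
    _ = ∑ i ∈ s, ∑ A ∈ (s.erase i).powersetCard r, x i * ∏ j ∈ A, x j := by
        rw [sum_sigma', sum_sigma']
        refine sum_nbij' (fun p ↦ ⟨p.2, p.1.erase p.2⟩) (fun p ↦ ⟨insert p.1 p.2, p.1⟩)
          ?_ ?_ ?_ ?_ fun _ _ ↦ rfl
        · rintro ⟨B, i⟩ h
          simp only [mem_sigma, mem_powersetCard] at h ⊢
          grind
        · rintro ⟨i, A⟩ h
          simp only [mem_sigma, mem_powersetCard] at h ⊢
          grind
        · rintro ⟨B, i⟩ h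
          simp [insert_erase (mem_sigma.1 h).2]
        · rintro ⟨i, A⟩ h
          have hiA : i ∉ A := fun hi ↦
            notMem_erase i s ((mem_powersetCard.1 (mem_sigma.1 h).2).1 hi)
          simp [erase_insert hiA]
    _ = ∑ i ∈ s, x i * (s.erase i).esymm r x := by simp only [esymm, mul_sum]

def esymmRatio (s : Finset ι) (r : ℕ) (x : ι → ℝ) : ℝ :=
  s.esymm (r + 1) x / s.esymm r x

theorem esymmRatio_smul (s : Finset ι) (r : ℕ) {c : ℝ} (hc : c ≠ 0) (x : ι → ℝ) :
    s.esymmRatio r (c • x) = c * s.esymmRatio r x := by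
  rw [esymmRatio, esymmRatio, esymm_smul, esymm_smul, pow_succ, mul_assoc,
    mul_div_mul_left _ _ (pow_ne_zero r hc), mul_div_assoc]

theorem esymmRatio_succ_eq_sum_parallelSum [DecidableEq ι] {s : Finset ι} {r : ℕ} {x : ι → ℝ}
    (hr : r + 2 ≤ #s) (hx : ∀ i ∈ s, 0 < x i) :
    s.esymmRatio (r + 1) x
      = ((r : ℝ) + 2)⁻¹ * ∑ i ∈ s, parallelSum (x i) ((s.erase i).esymmRatio r x) := by
  have hE : 0 < s.esymm (r + 1) x := esymm_pos (by omega) hx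
  have hterm : ∀ i ∈ s, parallelSum (x i) ((s.erase i).esymmRatio r x)
      = x i * (s.erase i).esymm (r + 1) x / s.esymm (r + 1) x := by
    intro i hi
    have hB : 0 < (s.erase i).esymm r x :=
      esymm_pos (by rw [card_erase_of_mem hi]; omega) fun j hj ↦ hx j (mem_of_mem_erase hj)
    rw [parallelSum, esymmRatio, esymm_erase hi r x]
    field_simp
  rw [sum_congr rfl hterm, ← sum_div, ← succ_mul_esymm, esymmRatio]
  push_cast
  field_simp
  ring

theorem esymmRatio_add_le {s : Finset ι} {r : ℕ} (hr : r + 1 ≤ #s) {x y : ι → ℝ}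
    (hx : ∀ i ∈ s, 0 < x i) (hy : ∀ i ∈ s, 0 < y i) :
    s.esymmRatio r x + s.esymmRatio r y ≤ s.esymmRatio r (x + y) := by
  classical
  induction r generalizing s with
  | zero => simp [esymmRatio, esymm_one, esymm_zero, sum_add_distrib]
  | succ r ih =>
    have hxy : ∀ i ∈ s, 0 < (x + y) i := fun i hi ↦ add_pos (hx i hi) (hy i hi)
    rw [esymmRatio_succ_eq_sum_parallelSum hr hx, esymmRatio_succ_eq_sum_parallelSum hr hy,
      esymmRatio_succ_eq_sum_parallelSum hr hxy, ← mul_add, ← sum_add_distrib]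
    gcongr with i hi
    have hr' : r + 1 ≤ #(s.erase i) := by rw [card_erase_of_mem hi]; omega
    have hx' : ∀ j ∈ s.erase i, 0 < x j := fun j hj ↦ hx j (mem_of_mem_erase hj)
    have hy' : ∀ j ∈ s.erase i, 0 < y j := fun j hj ↦ hy j (mem_of_mem_erase hj)
    have hpos : ∀ z : ι → ℝ, (∀ j ∈ s.erase i, 0 < z j) → 0 < (s.erase i).esymmRatio r z :=
      fun z hz ↦ div_pos (esymm_pos hr' hz) (esymm_pos (by omega) hz)
    calc parallelSum (x i) ((s.erase i).esymmRatio r x)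
          + parallelSum (y i) ((s.erase i).esymmRatio r y)
        ≤ parallelSum (x i + y i)
            ((s.erase i).esymmRatio r x + (s.erase i).esymmRatio r y) :=
          parallelSum_add_le (hx i hi) (hpos x hx') (hy i hi) (hpos y hy')
      _ ≤ parallelSum ((x + y) i) ((s.erase i).esymmRatio r (x + y)) :=
          parallelSum_le_parallelSum_right (hxy i hi)
            (add_pos (hpos x hx') (hpos y hy')) (ih hr' hx' hy')

theorem esymm_inv [DecidableEq ι] {s : Finset ι} {j : ℕ} (hj : j ≤ #s) {x : ι → ℝ}
    (hx : ∀ i ∈ s, x i ≠ 0) :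
    s.esymm j x⁻¹ = (∏ i ∈ s, x i)⁻¹ * s.esymm (#s - j) x := by
  rw [esymm, esymm, mul_sum]
  refine sum_nbij' (s \ ·) (s \ ·) ?_ ?_ ?_ ?_ ?_
  · intro A hA
    simp only [mem_powersetCard] at hA ⊢
    grind
  · intro A hA
    simp only [mem_powersetCard] at hA ⊢
    grind
  · intro A hA
    exact sdiff_sdiff_eq_self (mem_powersetCard.1 hA).1
  · intro A hA
    exact sdiff_sdiff_eq_self (mem_powersetCard.1 hA).1
  · intro A hA
    have hAs := (mem_powersetCard.1 hA).1
    have hP : ∏ i ∈ s \ A, x i ≠ 0 := prod_ne_zero_iff.2 fun i hi ↦ hx i (sdiff_subset hi)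
    rw [Pi.inv_def, prod_inv_distrib, ← prod_sdiff hAs]
    field_simp

end Finset

theorem convex_posCone (n : ℕ) : Convex ℝ (posCone n) :=
  fun _ hx _ hy _ _ ha hb hab i ↦ convex_Ioi (0 : ℝ) (hx i) (hy i) ha hb hab

theorem smul_mem_posCone {n : ℕ} {x : Fin n → ℝ} (hx : x ∈ posCone n) {c : ℝ} (hc : 0 < c) :
    c • x ∈ posCone n :=
  fun i ↦ mul_pos hc (hx i)

theorem concaveOn_esymmRatio {n r : ℕ} (hr : r < n) :
    ConcaveOn ℝ (posCone n) ((univ : Finset (Fin n)).esymmRatio r) := by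
  have hcard : r + 1 ≤ #(univ : Finset (Fin n)) := by simpa using hr
  exact concaveOn_of_superadditive_of_homogeneous (convex_posCone n)
    (fun x hx c hc ↦ smul_mem_posCone hx hc)
    (fun x _ c hc ↦ esymmRatio_smul _ r hc.ne' x)
    (fun x hx y hy ↦ esymmRatio_add_le hcard (fun i _ ↦ hx i) (fun i _ ↦ hy i))

theorem eS_pos {n r : ℕ} (hr : r ≤ n) {x : Fin n → ℝ} (hx : x ∈ posCone n) : 0 < eS n r x := by
  have hchoose : (0 : ℝ) < n.choose r := mod_cast Nat.choose_pos hr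
  have hesymm := esymm_pos (s := univ) (by simpa using hr) fun i _ ↦ hx i
  exact mul_pos (inv_pos.2 hchoose) hesymm

theorem eS_succ_div_eS (n r : ℕ) (x : Fin n → ℝ) :
    eS n (r + 1) x / eS n r x
      = ((n.choose r : ℝ) / n.choose (r + 1)) * (univ : Finset (Fin n)).esymmRatio r x := by
  simp only [eS, esymmRatio, esymm, div_eq_mul_inv, mul_inv, inv_inv]
  ring

theorem concaveOn_eS_succ_div_eS {n r : ℕ} (hr : r < n) :
    ConcaveOn ℝ (posCone n) fun x ↦ eS n (r + 1) x / eS n r x :=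
  ((concaveOn_esymmRatio hr).smul (by positivity)).congr fun x _ ↦
    (eS_succ_div_eS n r x).symm

theorem eS_invPt {n j : ℕ} (hj : j ≤ n) {x : Fin n → ℝ} (hx : x ∈ posCone n) :
    eS n j (invPt x) = (∏ i, x i)⁻¹ * eS n (n - j) x := by
  have h := esymm_inv (s := univ) (by simpa using hj) fun i _ ↦ (hx i).ne'
  rw [card_univ, Fintype.card_fin] at h
  rw [eS, eS, Nat.choose_symm hj, ← esymm, ← esymm, show invPt x = x⁻¹ from rfl, h]
  ring

theorem eS_succ_div_eS_invPt {n k : ℕ} (hk : k < n) {x : Fin n → ℝ} (hx : x ∈ posCone n) :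
    eS n (k + 1) (invPt x) / eS n k (invPt x) = eS n (n - k - 1) x / eS n (n - k) x := by
  have hP : (∏ i, x i)⁻¹ ≠ 0 := inv_ne_zero (prod_ne_zero_iff.2 fun i _ ↦ (hx i).ne')
  rw [eS_invPt hk hx, eS_invPt hk.le hx, Nat.sub_succ', mul_div_mul_left _ _ hP]

theorem stmt8 {n k : ℕ} (hk : k < n) :
    ConcaveOn ℝ (posCone n)
      (fun x => -(eS n (k + 1) (invPt x) / eS n k (invPt x))) ∧
    ∀ x ∈ posCone n,
      (eS n (k + 1) (invPt x) / eS n k (invPt x))⁻¹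
        = eS n (n - k) x / eS n (n - k - 1) x := by
  have hdual : ∀ x ∈ posCone n, eS n (k + 1) (invPt x) / eS n k (invPt x)
      = (eS n (n - k) x / eS n (n - k - 1) x)⁻¹ := fun x hx ↦ by
    rw [eS_succ_div_eS_invPt hk hx, inv_div]
  have hnk : n - k = n - k - 1 + 1 := by omega
  have hconc : ConcaveOn ℝ (posCone n) fun x ↦ eS n (n - k) x / eS n (n - k - 1) x := by
    rw [hnk]
    exact concaveOn_eS_succ_div_eS (by omega)
  have hpos : ∀ x ∈ posCone n, 0 < eS n (n - k) x / eS n (n - k - 1) x := fun x hx ↦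
    div_pos (eS_pos (by omega) hx) (eS_pos (by omega) hx)
  refine ⟨(hconc.convexOn_inv hpos).neg.congr fun x hx ↦ ?_, fun x hx ↦ by rw [hdual x hx, inv_inv]⟩
  simp only [Pi.neg_apply, hdual x hx]
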